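/- arXiv:2209.08753 — 3 statements merged into one kernel-verified Lean document; each statement's English description precedes it below -/
import Mathlib

section
/- Let L_0 and L_1 be disjoint finite relational languages and K_0, K_1 be Fraïssé classes of finite L_0- and L_1-structures respectively. If K_0 and K_1 both have the strong amalgamation property, then the sum K_0 ⊕ K_1 is a Fraïssé class (i.e., it has the hereditary property, the joint embedding property and the amalgamation property) and moreover has the strong amalgamation property. -/
/-! Heredity passes to reducts, and the joint embedding and amalgamation properties are the weak
forms of the two halves of SAP. For SAP of the sum, take strong amalgams `D₀` of the
`L₁`-reducts and `D₁` of the `L₂`-reducts of `B ← A → C`. In both, `b ∈ B` and `c ∈ C` meet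
exactly when they come from a common `a ∈ A`, so `D₀` and `D₁` glue `B ⊕ C` along the same
equivalence relation. The quotient `X` therefore injects into both; the `L₁`- and
`L₂`-structures it inherits from `D₀` and `D₁` lie in `K₀` and `K₁` by heredity, and together
they make `X` a strong amalgam in `K₀ ⊕ K₁`. -/

open FirstOrder FirstOrder.Language

universe u v w

namespace NATPPaper

variable {L : FirstOrder.Language.{u, v}}

/-- A class `K` of structures has the strong amalgamation property (SAP): amalgamation where the
images of the two structures intersect exactly in the image of the common substructure, together
with the disjoint joint embedding property (the case `A = ∅`). -/
def IsSAP (K : Set (CategoryTheory.Bundled.{w} L.Structure)) : Prop :=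
  (∀ A B C : CategoryTheory.Bundled.{w} L.Structure, A ∈ K → B ∈ K → C ∈ K →
      ∀ (e : A ↪[L] B) (f : A ↪[L] C),
        ∃ (D : CategoryTheory.Bundled.{w} L.Structure) (_ : D ∈ K)
          (g : B ↪[L] D) (h : C ↪[L] D),
            g.comp e = h.comp f ∧
            Set.range ⇑g ∩ Set.range ⇑h = Set.range ⇑(g.comp e)) ∧
  (∀ B C : CategoryTheory.Bundled.{w} L.Structure, B ∈ K → C ∈ K →
      ∃ (D : CategoryTheory.Bundled.{w} L.Structure) (_ : D ∈ K)
        (g : B ↪[L] D) (h : C ↪[L] D),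
          Set.range ⇑g ∩ Set.range ⇑h = ∅)

variable {L₁ : FirstOrder.Language.{u, v}} {L₂ : FirstOrder.Language.{u, v}}

/-- The sum `K₀ ⊕ K₁` of a class of finite `L₁`-structures and a class of finite
`L₂`-structures: the class of `(L₁ ∪ L₂)`-structures whose `L₁`-reduct lies in `K₀` and whose
`L₂`-reduct lies in `K₁`. -/
def sumClass (K₀ : Set (CategoryTheory.Bundled.{w} L₁.Structure))
    (K₁ : Set (CategoryTheory.Bundled.{w} L₂.Structure)) :
    Set (CategoryTheory.Bundled.{w} (L₁.sum L₂).Structure) :=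
  {M | (⟨M, (LHom.sumInl : L₁ →ᴸ L₁.sum L₂).reduct M⟩ : CategoryTheory.Bundled L₁.Structure) ∈ K₀
     ∧ (⟨M, (LHom.sumInr : L₂ →ᴸ L₁.sum L₂).reduct M⟩ : CategoryTheory.Bundled L₂.Structure) ∈ K₁}

end NATPPaper

open CategoryTheory Function

theorem Set.range_inter_range_eq_empty_iff {B C D : Type*} {g : B → D} {h : C → D} :
    Set.range g ∩ Set.range h = ∅ ↔ ∀ b c, g b ≠ h c := by
  rw [← Set.disjoint_iff_inter_eq_empty, Set.disjoint_range_iff]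

theorem sumElim_eq_iff_sumElim_eq {B C D₀ D₁ : Type*} {g₀ : B → D₀} {h₀ : C → D₀}
    {g₁ : B → D₁} {h₁ : C → D₁} (hg₀ : Injective g₀) (hh₀ : Injective h₀)
    (hg₁ : Injective g₁) (hh₁ : Injective h₁) (hmeet : ∀ b c, g₀ b = h₀ c ↔ g₁ b = h₁ c) :
    ∀ x y, Sum.elim g₀ h₀ x = Sum.elim g₀ h₀ y ↔ Sum.elim g₁ h₁ x = Sum.elim g₁ h₁ y := by
  rintro (b | c) (b' | c')
  · exact hg₀.eq_iff.trans hg₁.eq_iff.symm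
  · exact hmeet b c'
  · exact eq_comm.trans ((hmeet b' c).trans eq_comm)
  · exact hh₀.eq_iff.trans hh₁.eq_iff.symm

namespace FirstOrder.Language

variable {L : Language.{u, v}}

theorem Embedding.strongAmalgam_iff {A B C D : Type*} [L.Structure A] [L.Structure B]
    [L.Structure C] [L.Structure D] (e : A ↪[L] B) (f : A ↪[L] C) (g : B ↪[L] D)
    (h : C ↪[L] D) :
    (g.comp e = h.comp f ∧ Set.range g ∩ Set.range h = Set.range (g.comp e)) ↔
      ∀ b c, g b = h c ↔ ∃ a, e a = b ∧ f a = c := by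
  constructor
  · rintro ⟨hcomm, hrange⟩ b c
    have hcomm' (a : A) : g (e a) = h (f a) := DFunLike.congr_fun hcomm a
    refine ⟨fun hbc => ?_, fun ⟨a, hab, hac⟩ => hab ▸ hac ▸ hcomm' a⟩
    obtain ⟨a, ha⟩ : g b ∈ Set.range (g.comp e) := hrange ▸ ⟨⟨b, rfl⟩, ⟨c, hbc.symm⟩⟩
    refine ⟨a, g.injective ha, h.injective ?_⟩
    rw [← hcomm', ← hbc]
    exact ha
  · intro hmeet
    have hcomm' (a : A) : g (e a) = h (f a) := (hmeet _ _).2 ⟨a, rfl, rfl⟩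
    refine ⟨Embedding.ext hcomm', Set.ext fun d => ⟨?_, ?_⟩⟩
    · rintro ⟨⟨b, rfl⟩, ⟨c, hcb⟩⟩
      obtain ⟨a, rfl, -⟩ := (hmeet b c).1 hcb.symm
      exact ⟨a, rfl⟩
    · rintro ⟨a, rfl⟩
      exact ⟨⟨e a, rfl⟩, ⟨f a, (hcomm' a).symm⟩⟩

section Reduct

variable {L' : Language} (ϕ : L →ᴸ L')

abbrev LHom.bundledReduct (M : Bundled.{w} L'.Structure) : Bundled.{w} L.Structure :=
  ⟨M, ϕ.reduct M⟩

def LHom.reductEmbedding {M N : Bundled.{w} L'.Structure} (f : M ↪[L'] N) :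
    ϕ.bundledReduct M ↪[L] ϕ.bundledReduct N where
  toFun := f
  inj' := f.injective
  map_fun' F x := f.map_fun (ϕ.onFunction F) x
  map_rel' r x := f.map_rel (ϕ.onRelation r) x

theorem LHom.bundledReduct_mem_age [L.IsRelational] [L'.IsRelational]
    {M N : Bundled.{w} L'.Structure} (hN : N ∈ L'.age M) :
    ϕ.bundledReduct N ∈ L.age (ϕ.bundledReduct M) :=
  let ⟨hfg, ⟨f⟩⟩ := hN
  have : Finite N := hfg.finite
  ⟨.of_finite, ⟨ϕ.reductEmbedding f⟩⟩

end Reduct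

section Comap

variable (L) [L.IsRelational]

abbrev comapStructure {X M : Type*} [L.Structure M] (j : X → M) : L.Structure X where
  funMap F := isEmptyElim F
  RelMap r x := Structure.RelMap r (j ∘ x)

variable {L}

theorem comapStructure_mem_age {X M : Type w} [Finite X] [L.Structure M] {j : X → M}
    (hj : Injective j) : (⟨X, comapStructure L j⟩ : Bundled.{w} L.Structure) ∈ L.age M :=
  letI := comapStructure L j
  ⟨.of_finite,
    ⟨{ toFun := j, inj' := hj, map_fun' := isEmptyElim, map_rel' := fun _ _ => Iff.rfl }⟩⟩

def Embedding.toComap {N : Bundled.{w} L.Structure} {M X : Type*} [L.Structure M] {j : X → M}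
    (φ : N ↪[L] M) (u : N → X) (hu : j ∘ u = φ) :
    @Embedding L N X _ (comapStructure L j) :=
  letI := comapStructure L j
  { toFun := u
    inj' := Injective.of_comp (f := j) (hu ▸ φ.injective)
    map_fun' := isEmptyElim
    map_rel' := fun r x => by
      show Structure.RelMap r (j ∘ u ∘ x) ↔ _
      rw [← Function.comp_assoc, hu]
      exact φ.map_rel r x }

end Comap

variable {L₁ L₂ : Language} in
def Embedding.sumOfReducts {N : Bundled.{w} (L₁.sum L₂).Structure} {X : Type*}
    [L₁.Structure X] [L₂.Structure X] (ψ₁ : LHom.sumInl.bundledReduct N ↪[L₁] X)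
    (ψ₂ : LHom.sumInr.bundledReduct N ↪[L₂] X) (h : ⇑ψ₁ = ⇑ψ₂) : N ↪[L₁.sum L₂] X where
  toFun := ψ₁
  inj' := ψ₁.injective
  map_fun' := by
    rintro n (F | F) x
    · exact ψ₁.map_fun F x
    · rw [h]; exact ψ₂.map_fun F x
  map_rel' := by
    rintro n (r | r) x
    · exact ψ₁.map_rel r x
    · rw [h]; exact ψ₂.map_rel r x

end FirstOrder.Language

namespace NATPPaper

variable {L : FirstOrder.Language.{u, v}}
variable {L₁ : FirstOrder.Language.{u, v}} {L₂ : FirstOrder.Language.{u, v}}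

theorem IsSAP.jointEmbedding {K : Set (Bundled.{w} L.Structure)} (hK : IsSAP K) :
    JointEmbedding K := fun B hB C hC =>
  let ⟨D, hD, g, h, _⟩ := hK.2 B C hB hC
  ⟨D, hD, ⟨g⟩, ⟨h⟩⟩

theorem IsSAP.amalgamation {K : Set (Bundled.{w} L.Structure)} (hK : IsSAP K) :
    Amalgamation K := fun A B C e f hA hB hC =>
  let ⟨D, hD, g, h, hcomm, _⟩ := hK.1 A B C hA hB hC e f
  ⟨D, g, h, hD, hcomm⟩

section SumClass

variable [L₁.IsRelational] [L₂.IsRelational]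
  {K₀ : Set (Bundled.{w} L₁.Structure)} {K₁ : Set (Bundled.{w} L₂.Structure)}

theorem hereditary_sumClass (her₀ : Hereditary K₀) (her₁ : Hereditary K₁) :
    Hereditary (sumClass K₀ K₁) := fun _ hM _ hN =>
  ⟨her₀ _ hM.1 (LHom.sumInl.bundledReduct_mem_age hN),
    her₁ _ hM.2 (LHom.sumInr.bundledReduct_mem_age hN)⟩

theorem exists_amalgam_mem_sumClass (her₀ : Hereditary K₀) (her₁ : Hereditary K₁)
    {B C : Bundled.{w} (L₁.sum L₂).Structure} [Finite B] [Finite C]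
    {D₀ : Bundled.{w} L₁.Structure} (hD₀ : D₀ ∈ K₀)
    (g₀ : LHom.sumInl.bundledReduct B ↪[L₁] D₀) (h₀ : LHom.sumInl.bundledReduct C ↪[L₁] D₀)
    {D₁ : Bundled.{w} L₂.Structure} (hD₁ : D₁ ∈ K₁)
    (g₁ : LHom.sumInr.bundledReduct B ↪[L₂] D₁) (h₁ : LHom.sumInr.bundledReduct C ↪[L₂] D₁)
    (hmeet : ∀ b c, g₀ b = h₀ c ↔ g₁ b = h₁ c) :
    ∃ D ∈ sumClass K₀ K₁, ∃ (g : B ↪[L₁.sum L₂] D) (h : C ↪[L₁.sum L₂] D),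
      ∀ b c, g b = h c ↔ g₀ b = h₀ c := by
  have hker := sumElim_eq_iff_sumElim_eq g₀.injective h₀.injective g₁.injective h₁.injective hmeet
  let X := Quotient (Setoid.ker (Sum.elim g₀ h₀))
  let j₀ : X → D₀ := Setoid.kerLift (Sum.elim g₀ h₀)
  let j₁ : X → D₁ := Quotient.lift (Sum.elim g₁ h₁) fun x y hxy => (hker x y).1 hxy
  have hj₀ : Injective j₀ := Setoid.kerLift_injective _
  have hj₁ : Injective j₁ := by
    rintro ⟨x⟩ ⟨y⟩ hxy
    exact Quotient.sound ((hker x y).2 hxy)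
  let := comapStructure L₁ j₀
  let := comapStructure L₂ j₁
  refine ⟨⟨X, inferInstance⟩, ⟨her₀ _ hD₀ (comapStructure_mem_age hj₀),
    her₁ _ hD₁ (comapStructure_mem_age hj₁)⟩,
    .sumOfReducts (g₀.toComap (Quotient.mk _ ∘ Sum.inl) rfl)
      (g₁.toComap (Quotient.mk _ ∘ Sum.inl) rfl) rfl,
    .sumOfReducts (h₀.toComap (Quotient.mk _ ∘ Sum.inr) rfl)
      (h₁.toComap (Quotient.mk _ ∘ Sum.inr) rfl) rfl,
    fun _ _ => Quotient.eq⟩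

theorem IsSAP.sumClass (her₀ : Hereditary K₀) (her₁ : Hereditary K₁)
    (fin₀ : ∀ M ∈ K₀, Finite M) (sap₀ : IsSAP K₀) (sap₁ : IsSAP K₁) :
    IsSAP (sumClass K₀ K₁) := by
  refine ⟨fun A B C hA hB hC e f => ?_, fun B C hB hC => ?_⟩
  · have := fin₀ _ hB.1
    have := fin₀ _ hC.1
    obtain ⟨D₀, hD₀, g₀, h₀, hsq₀⟩ := sap₀.1 _ _ _ hA.1 hB.1 hC.1
      (LHom.sumInl.reductEmbedding e) (LHom.sumInl.reductEmbedding f)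
    obtain ⟨D₁, hD₁, g₁, h₁, hsq₁⟩ := sap₁.1 _ _ _ hA.2 hB.2 hC.2
      (LHom.sumInr.reductEmbedding e) (LHom.sumInr.reductEmbedding f)
    rw [Embedding.strongAmalgam_iff] at hsq₀ hsq₁
    obtain ⟨D, hD, g, h, hmeet⟩ := exists_amalgam_mem_sumClass her₀ her₁ hD₀ g₀ h₀ hD₁ g₁ h₁
      fun b c => (hsq₀ b c).trans (hsq₁ b c).symm
    exact ⟨D, hD, g, h, (Embedding.strongAmalgam_iff e f g h).2
      fun b c => (hmeet b c).trans (hsq₀ b c)⟩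
  · have := fin₀ _ hB.1
    have := fin₀ _ hC.1
    obtain ⟨D₀, hD₀, g₀, h₀, hdisj₀⟩ := sap₀.2 _ _ hB.1 hC.1
    obtain ⟨D₁, hD₁, g₁, h₁, hdisj₁⟩ := sap₁.2 _ _ hB.2 hC.2
    rw [Set.range_inter_range_eq_empty_iff] at hdisj₀ hdisj₁
    obtain ⟨D, hD, g, h, hmeet⟩ := exists_amalgam_mem_sumClass her₀ her₁ hD₀ g₀ h₀ hD₁ g₁ h₁
      fun b c => iff_of_false (hdisj₀ b c) (hdisj₁ b c)
    exact ⟨D, hD, g, h, Set.range_inter_range_eq_empty_iff.2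
      fun b c hbc => hdisj₀ b c ((hmeet b c).1 hbc)⟩

end SumClass

theorem sumClass_isFraisse_and_SAP_general
    [L₁.IsRelational] [L₂.IsRelational]
    (K₀ : Set (CategoryTheory.Bundled.{w} L₁.Structure))
    (K₁ : Set (CategoryTheory.Bundled.{w} L₂.Structure))
    (hK₀ : IsFraisse K₀) (hK₁ : IsFraisse K₁)
    (hSAP₀ : IsSAP K₀) (hSAP₁ : IsSAP K₁) :
    (Hereditary (sumClass K₀ K₁) ∧ JointEmbedding (sumClass K₀ K₁) ∧
      Amalgamation (sumClass K₀ K₁)) ∧ IsSAP (sumClass K₀ K₁) := by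
  have hSAP : IsSAP (sumClass K₀ K₁) :=
    .sumClass hK₀.hereditary hK₁.hereditary (fun M hM => (hK₀.FG M hM).finite) hSAP₀ hSAP₁
  exact ⟨⟨hereditary_sumClass hK₀.hereditary hK₁.hereditary, hSAP.jointEmbedding,
    hSAP.amalgamation⟩, hSAP⟩

/-- **Remark 3.14**: If `K₀` and `K₁` are Fraïssé classes of finite structures in disjoint finite
relational languages, both with the strong amalgamation property, then the sum `K₀ ⊕ K₁` is a
Fraïssé class (it has the hereditary property, the joint embedding property and the amalgamation
property) and moreover has the strong amalgamation property. -/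
theorem sumClass_isFraisse_and_SAP
    [L₁.IsRelational] [L₂.IsRelational]
    [Finite (Σ n, L₁.Relations n)] [Finite (Σ n, L₂.Relations n)]
    (K₀ : Set (CategoryTheory.Bundled.{w} L₁.Structure))
    (K₁ : Set (CategoryTheory.Bundled.{w} L₂.Structure))
    (hK₀ : IsFraisse K₀) (hK₁ : IsFraisse K₁)
    (hfin₀ : ∀ M ∈ K₀, Finite M) (hfin₁ : ∀ M ∈ K₁, Finite M)
    (hSAP₀ : IsSAP K₀) (hSAP₁ : IsSAP K₁) :
    (Hereditary (sumClass K₀ K₁) ∧ JointEmbedding (sumClass K₀ K₁) ∧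
      Amalgamation (sumClass K₀ K₁)) ∧ IsSAP (sumClass K₀ K₁) :=
  sumClass_isFraisse_and_SAP_general K₀ K₁ hK₀ hK₁ hSAP₀ hSAP₁

end NATPPaper
end

section
/- Let T be a complete theory, φ(x;y) a formula and (a_η)_{η∈2^{≤ω}} a strongly indiscernible tree in a monster model of T such that the pair (φ(x;y), (a_η)_{η∈2^{≤ω}}) witnesses ATP. Then the partial type {φ(x; a_η) : η ∈ 2^ω} has infinitely many realizations in the monster model. -/
open FirstOrder FirstOrder.Language

universe u v w u_g

namespace NATPPaper

/-- Nodes of the tree `2^{≤ω}`: functions `ℕ → Option Bool` whose domain is an initial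
segment of `ℕ` (possibly all of `ℕ`, giving the branches `2^ω`). -/
def TNode : Type := {f : ℕ → Option Bool // ∀ i j : ℕ, i ≤ j → f j ≠ none → f i ≠ none}

namespace TNode

/-- The tree partial order `⊴` (end-extension / initial segment). -/
def PrefixLE (η ν : TNode) : Prop := ∀ (i : ℕ) (b : Bool), η.1 i = some b → ν.1 i = some b

/-- Comparability in the tree order. -/
def Comparable (η ν : TNode) : Prop := PrefixLE η ν ∨ PrefixLE ν η

/-- Antichain: pairwise incomparable set of nodes. -/
def IsAntichain (X : Set TNode) : Prop := ∀ η ∈ X, ∀ ν ∈ X, η ≠ ν → ¬ Comparable η ν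

open Classical in
/-- The meet `η ∧ ν`: the longest common initial segment. -/
noncomputable def meet (η ν : TNode) : TNode :=
  ⟨fun i => if (∀ j ≤ i, η.1 j = ν.1 j ∧ η.1 j ≠ none) then η.1 i else none, by
    intro i j hij hj
    dsimp only at hj ⊢
    by_cases h : ∀ k ≤ j, η.1 k = ν.1 k ∧ η.1 k ≠ none
    · have hi : ∀ k ≤ i, η.1 k = ν.1 k ∧ η.1 k ≠ none := fun k hk => h k (hk.trans hij)
      rw [if_pos hi]
      exact (h i hij).2
    · rw [if_neg h] at hj
      exact absurd rfl hj⟩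

/-- The lexicographic (strict) order on tree nodes. -/
def LexLT (η ν : TNode) : Prop :=
  PrefixLE η ν ∨ ∃ i : ℕ, (∀ j < i, η.1 j = ν.1 j) ∧ η.1 i = some false ∧ ν.1 i = some true

/-- A branch of the tree: an element of `2^ω`. -/
def IsBranch (η : TNode) : Prop := ∀ i : ℕ, η.1 i ≠ none

/-- A finite node `η ∈ 2^{<ω}`, coded by a list of booleans. -/
def ofList (l : List Bool) : TNode :=
  ⟨fun i => l[i]?, by
    intro i j hij hj
    dsimp only at hj ⊢
    rw [Ne, List.getElem?_eq_none_iff] at hj ⊢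
    intro hi
    exact hj (le_trans hi hij)⟩

/-- The branch of `2^ω` determined by `f : ℕ → Bool`. -/
def ofBranch (f : ℕ → Bool) : TNode := ⟨fun i => some (f i), fun _ _ _ h => by simp at h ⊢⟩

end TNode

/-- The language of trees `{⊴, <_lex, ∧}`: one binary function (meet) and two binary
relations (tree order and lexicographic order). -/
def treeLang : FirstOrder.Language :=
  ⟨fun n => PLift (n = 2), fun n => PLift (n = 2) ⊕ PLift (n = 2)⟩

noncomputable instance : treeLang.Structure TNode where
  funMap {n} f v := TNode.meet (v ⟨0, by have := f.down; omega⟩)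
    (v ⟨1, by have := f.down; omega⟩)
  RelMap {n} R v :=
    match R with
    | Sum.inl h => TNode.PrefixLE (v ⟨0, by have := h.down; omega⟩)
        (v ⟨1, by have := h.down; omega⟩)
    | Sum.inr h => TNode.LexLT (v ⟨0, by have := h.down; omega⟩)
        (v ⟨1, by have := h.down; omega⟩)


variable {L : FirstOrder.Language.{u, v}}

/-- A tree-indexed family `(a_η)_{η ∈ 2^{≤ω}}` of `γ`-tuples in `M` is strongly indiscernible
over `A`: finite tuples of indices with the same quantifier-free type in the tree language
`{⊴, <_lex, ∧}` yield parameter tuples with the same type over `A`. -/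
def StronglyIndiscernibleOver (L : FirstOrder.Language.{u, v}) {M : Type w} [L.Structure M]
    {γ : Type u_g} (a : TNode → γ → M) (A : Set M) : Prop :=
  ∀ (n : ℕ) (η ν : Fin n → TNode),
    (∀ φ : treeLang.Formula (Fin n), BoundedFormula.IsQF φ → (φ.Realize η ↔ φ.Realize ν)) →
    ∀ (k : ℕ) (c : Fin k → M), (∀ j, c j ∈ A) →
      ∀ ψ : L.Formula ((Fin n × γ) ⊕ Fin k),
        (ψ.Realize (Sum.elim (fun p => a (η p.1) p.2) c) ↔
          ψ.Realize (Sum.elim (fun p => a (ν p.1) p.2) c))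

/-- `(φ(x; y), (a_η)_{η ∈ 2^{≤ω}})` witnesses ATP: for every subset `X ⊆ 2^{≤ω}`, the partial
type `{φ(x; a_η) : η ∈ X}` is realized iff `X` is an antichain. -/
def ATPWitnessFull {M : Type w} [L.Structure M] {n m : ℕ}
    (φ : L.Formula (Fin n ⊕ Fin m)) (a : TNode → Fin m → M) : Prop :=
  ∀ X : Set TNode,
    (∃ b : Fin n → M, ∀ η ∈ X, φ.Realize (Sum.elim b (a η))) ↔ TNode.IsAntichain X

/-- `M` is `μ`-saturated (for types in small tuples of variables over small parameter sets):
every finitely satisfiable set of formulas is realized. -/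
def Saturated (L : FirstOrder.Language.{u, v}) (μ : Cardinal.{w}) (M : Type w) [L.Structure M] : Prop :=
  ∀ (α β : Type w), Cardinal.mk α < μ → Cardinal.mk β < μ →
    ∀ (p : Set (L.Formula (α ⊕ β))) (v : β → M),
      (∀ F : Finset (L.Formula (α ⊕ β)), ↑F ⊆ p →
          ∃ x : α → M, ∀ φ ∈ F, φ.Realize (Sum.elim x v)) →
      ∃ x : α → M, ∀ φ ∈ p, φ.Realize (Sum.elim x v)

/-!
Fix a finite set `S` of branches. Diagonalising against `S` gives a finite node that is an
initial segment of no branch in `S`, and hence an infinite `⊴`-chain `ν₀ ◁ ν₁ ◁ ⋯` of nodes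
incomparable with every branch of `S`. Each `S ∪ {νᵢ}` is an antichain, so ATP gives a
realization `bᵢ` of `{φ(x; a_η) : η ∈ S ∪ {νᵢ}}`; the `bᵢ` are pairwise distinct because a
single tuple cannot realize `φ(x; a_{νᵢ})` and `φ(x; a_{νⱼ})` for comparable `νᵢ ≠ νⱼ`. Thus
every finite part of the type `{φ(x; a_η) : η ∈ 2^ω}` has infinitely many realizations, and
saturation (the tree has size `𝔠 < μ`) realizes countably many pairwise distinct copies of the
whole type.
-/

open Cardinal

namespace TNode

lemma PrefixLE.trans {η ν ρ : TNode} (h₁ : PrefixLE η ν) (h₂ : PrefixLE ν ρ) : PrefixLE η ρ :=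
  fun i b h => h₂ i b (h₁ i b h)

lemma IsBranch.exists_eq_some {η : TNode} (h : η.IsBranch) (i : ℕ) : ∃ b, η.1 i = some b :=
  Option.ne_none_iff_exists'.mp (h i)

lemma IsBranch.eq_of_prefixLE {η ν : TNode} (h : η.IsBranch) (hp : PrefixLE η ν) : η = ν := by
  refine Subtype.ext (funext fun i => ?_)
  obtain ⟨b, hb⟩ := h.exists_eq_some i
  rw [hb, hp i b hb]

lemma IsBranch.not_prefixLE_ofList {η : TNode} (h : η.IsBranch) (l : List Bool) :
    ¬ PrefixLE η (ofList l) := by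
  intro hp
  obtain ⟨b, hb⟩ := h.exists_eq_some l.length
  simpa [ofList] using hp _ b hb

lemma ofList_injective : Function.Injective ofList := fun _ _ h =>
  List.ext_getElem? fun i => congrFun (congrArg Subtype.val h) i

lemma prefixLE_ofList_append (l t : List Bool) : PrefixLE (ofList l) (ofList (l ++ t)) := by
  intro i b hb
  obtain ⟨hi, -⟩ := List.getElem?_eq_some_iff.mp hb
  exact (List.getElem?_append_left hi).trans hb

lemma isAntichain_of_isBranch {X : Set TNode} (hX : ∀ η ∈ X, η.IsBranch) : IsAntichain X :=
  fun η hη ν hν hne hc => hc.elim (fun h => hne ((hX η hη).eq_of_prefixLE h))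
    (fun h => hne ((hX ν hν).eq_of_prefixLE h).symm)

lemma IsAntichain.insert {X : Set TNode} {ν : TNode} (hX : IsAntichain X)
    (hν : ∀ η ∈ X, ¬ Comparable ν η) : IsAntichain (insert ν X) := by
  rintro η (rfl | hη) ρ (rfl | hρ) hne
  · exact absurd rfl hne
  · exact hν ρ hρ
  · exact fun hc => hν η hη (Or.symm hc)
  · exact hX η hη ρ hρ hne

lemma exists_ofList_not_prefixLE (S : Finset TNode) (hS : ∀ η ∈ S, η.IsBranch) :
    ∃ s : List Bool, ∀ η ∈ S, ¬ PrefixLE (ofList s) η := by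
  classical
  induction S using Finset.induction_on with
  | empty => exact ⟨[], by simp⟩
  | insert η S _ ih =>
    obtain ⟨s, hs⟩ := ih fun ν hν => hS ν (Finset.mem_insert_of_mem hν)
    obtain ⟨b, hb⟩ := (hS η (Finset.mem_insert_self η S)).exists_eq_some s.length
    refine ⟨s ++ [!b], fun ν hν hp => ?_⟩
    rcases Finset.mem_insert.mp hν with rfl | hν
    · have := hp s.length (!b) (by simp [ofList])
      simp [hb] at this
    · exact hs ν hν ((prefixLE_ofList_append s _).trans hp)

lemma exists_chain_incomparable_with_branches (S : Finset TNode)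
    (hS : ∀ η ∈ S, η.IsBranch) :
    ∃ ν : ℕ → TNode, Function.Injective ν ∧ (∀ i j, Comparable (ν i) (ν j)) ∧
      ∀ i, ∀ η ∈ S, ¬ Comparable (ν i) η := by
  obtain ⟨s, hs⟩ := exists_ofList_not_prefixLE S hS
  have hchain : ∀ i j, i ≤ j → PrefixLE (ofList (s ++ List.replicate i false))
      (ofList (s ++ List.replicate j false)) := fun i j hij => by
    have : s ++ List.replicate j false =
        s ++ List.replicate i false ++ List.replicate (j - i) false := by
      rw [List.append_assoc, ← List.replicate_add, Nat.add_sub_cancel' hij]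
    rw [this]
    exact prefixLE_ofList_append _ _
  refine ⟨fun i => ofList (s ++ List.replicate i false), fun i j h => ?_,
    fun i j => (le_total i j).imp (hchain i j) (hchain j i), fun i η hη hc => ?_⟩
  · simpa using congrArg List.length (List.append_cancel_left (ofList_injective h))
  · rcases hc with hp | hp
    · exact hs η hη ((prefixLE_ofList_append s _).trans hp)
    · exact (hS η hη).not_prefixLE_ofList _ hp

end TNode

section ATP

variable {M : Type w} [L.Structure M] {n m : ℕ} {φ : L.Formula (Fin n ⊕ Fin m)}
  {a : TNode → Fin m → M}

lemma ATPWitnessFull.ne_of_comparable (hwit : ATPWitnessFull φ a) {η ν : TNode} (hne : η ≠ ν)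
    (hc : TNode.Comparable η ν) {b b' : Fin n → M} (hb : φ.Realize (Sum.elim b (a η)))
    (hb' : φ.Realize (Sum.elim b' (a ν))) : b ≠ b' := by
  rintro rfl
  have hanti := (hwit {η, ν}).mp ⟨b, by simp [hb, hb']⟩
  exact hanti η (by simp) ν (by simp) hne hc

lemma ATPWitnessFull.exists_injective_realizations (hwit : ATPWitnessFull φ a)
    (S : Finset TNode) (hS : ∀ η ∈ S, η.IsBranch) :
    ∃ b : ℕ → Fin n → M, Function.Injective b ∧
      ∀ i, ∀ η ∈ S, φ.Realize (Sum.elim (b i) (a η)) := by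
  obtain ⟨ν, hν_inj, hν_comp, hν_S⟩ := TNode.exists_chain_incomparable_with_branches S hS
  have hanti : ∀ i, TNode.IsAntichain (insert (ν i) ↑S) := fun i =>
    (TNode.isAntichain_of_isBranch hS).insert (hν_S i)
  choose b hb using fun i => (hwit _).mpr (hanti i)
  refine ⟨b, fun i j hij => by_contra fun hne => ?_, fun i η hη => hb i η (Or.inr hη)⟩
  exact hwit.ne_of_comparable (hν_inj.ne hne) (hν_comp i j) (hb i _ (Or.inl rfl))
    (hb j _ (Or.inl rfl)) hij

end ATP

section Saturation

variable {M : Type w} [L.Structure M] {n : ℕ} {β : Type w} {ι : Type*}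

lemma realize_relabel_sumMap {α α' γ γ' : Type*} (ψ : L.Formula (α ⊕ γ)) (f : α → α')
    (g : γ → γ') (x : α' → M) (y : γ' → M) :
    (ψ.relabel (Sum.map f g)).Realize (Sum.elim x y) ↔ ψ.Realize (Sum.elim (x ∘ f) (y ∘ g)) := by
  rw [Formula.realize_relabel, Sum.elim_comp_map]

/-- Enumerates the type, in countably many copies `x_i` of `x`, saying that every copy
realizes each `Φ k` and that distinct copies are distinct tuples. -/
noncomputable def distinctCopiesFormula (Φ : ι → L.Formula (Fin n ⊕ β)) :
    (ℕ × ι) ⊕ {q : ℕ × ℕ // q.1 ≠ q.2} → L.Formula (ULift.{w} (ℕ × Fin n) ⊕ β)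
  | .inl (i, k) => (Φ k).relabel (Sum.map (fun l => ⟨(i, l)⟩) id)
  | .inr q => ∼ (Formula.iInf fun l : Fin n =>
      Term.equal (Term.var (Sum.inl ⟨(q.1.1, l)⟩)) (Term.var (Sum.inl ⟨(q.1.2, l)⟩)))

variable {Φ : ι → L.Formula (Fin n ⊕ β)} {v : β → M}

lemma realize_distinctCopiesFormula_inl (x : ULift.{w} (ℕ × Fin n) → M) (i : ℕ) (k : ι) :
    (distinctCopiesFormula Φ (.inl (i, k))).Realize (Sum.elim x v) ↔
      (Φ k).Realize (Sum.elim (fun l => x ⟨(i, l)⟩) v) :=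
  realize_relabel_sumMap _ _ _ _ _

lemma realize_distinctCopiesFormula_inr (x : ULift.{w} (ℕ × Fin n) → M)
    (q : {q : ℕ × ℕ // q.1 ≠ q.2}) :
    (distinctCopiesFormula Φ (.inr q)).Realize (Sum.elim x v) ↔
      (fun l => x ⟨(q.1.1, l)⟩) ≠ fun l => x ⟨(q.1.2, l)⟩ := by
  simp [distinctCopiesFormula, Formula.realize_iInf, funext_iff]

lemma exists_realize_distinctCopiesFormula
    (hfin : ∀ s : Finset ι, {b | ∀ k ∈ s, (Φ k).Realize (Sum.elim b v)}.Infinite)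
    (D : Finset ((ℕ × ι) ⊕ {q : ℕ × ℕ // q.1 ≠ q.2})) :
    ∃ x, ∀ d ∈ D, (distinctCopiesFormula Φ d).Realize (Sum.elim x v) := by
  classical
  have := (hfin (D.toLeft.image Prod.snd)).to_subtype
  let e := Infinite.natEmbedding {b | ∀ k ∈ D.toLeft.image Prod.snd, (Φ k).Realize (Sum.elim b v)}
  refine ⟨fun q => (e q.down.1 : Fin n → M) q.down.2, ?_⟩
  rintro (⟨i, k⟩ | q) hd
  · rw [realize_distinctCopiesFormula_inl]
    exact (e i).2 k (Finset.mem_image_of_mem _ (Finset.mem_toLeft.mpr hd))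
  · rw [realize_distinctCopiesFormula_inr]
    exact fun h => q.2 (e.injective (Subtype.ext h))

theorem Saturated.infinite_setOf_realize {μ : Cardinal.{w}} (hsat : Saturated L μ M)
    (hμ : ℵ₀ < μ) (hβ : #β < μ)
    (hfin : ∀ s : Finset ι, {b | ∀ k ∈ s, (Φ k).Realize (Sum.elim b v)}.Infinite) :
    {b | ∀ k, (Φ k).Realize (Sum.elim b v)}.Infinite := by
  classical
  have hα : #(ULift.{w} (ℕ × Fin n)) < μ := mk_le_aleph0.trans_lt hμ
  obtain ⟨x, hx⟩ := hsat _ β hα hβ (Set.range (distinctCopiesFormula Φ)) v fun F hF => by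
    rw [← Set.image_univ, Finset.subset_set_image_iff] at hF
    obtain ⟨D, -, rfl⟩ := hF
    obtain ⟨x, hx⟩ := exists_realize_distinctCopiesFormula hfin D
    exact ⟨x, Finset.forall_mem_image.mpr hx⟩
  refine Set.infinite_of_injective_forall_mem (f := fun i l => x ⟨(i, l)⟩)
    (fun i j hij => by_contra fun hne => ?_) fun i k => ?_
  · exact (realize_distinctCopiesFormula_inr x ⟨(i, j), hne⟩).mp (hx _ ⟨_, rfl⟩) hij
  · exact (realize_distinctCopiesFormula_inl x i k).mp (hx _ ⟨_, rfl⟩)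

end Saturation

lemma mk_tNode_le_continuum : #TNode ≤ 𝔠 :=
  calc #TNode ≤ #(ℕ → Option Bool) := mk_le_of_injective Subtype.val_injective
    _ = 𝔠 := by
      rw [← power_def, mk_option, mk_bool, mk_nat]
      exact_mod_cast nat_power_aleph0 (n := 3) (by norm_num)

theorem infinitely_many_realizations_of_branches_general
    (M : Type w) [L.Structure M]
    (μ : Cardinal.{w}) (hμ : Cardinal.continuum < μ) (hsat : Saturated L μ M)
    {n m : ℕ} (φ : L.Formula (Fin n ⊕ Fin m)) (a : TNode → Fin m → M)
    (hwit : ATPWitnessFull φ a) :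
    {b : Fin n → M | ∀ η : TNode, TNode.IsBranch η →
        φ.Realize (Sum.elim b (a η))}.Infinite := by
  have hβ : #(ULift.{w} (TNode × Fin m)) < μ := by
    refine lt_of_le_of_lt ?_ hμ
    rw [mk_uLift, ← lift_continuum.{w, 0}, lift_le, mk_prod, lift_id, lift_id,
      ← continuum_mul_aleph0]
    exact mul_le_mul' mk_tNode_le_continuum (lt_aleph0_of_finite (Fin m)).le
  refine (hsat.infinite_setOf_realize (aleph0_lt_continuum.trans hμ) hβ
    (Φ := fun η : {η : TNode // η.IsBranch} => φ.relabel (Sum.map id fun r => ⟨(η.1, r)⟩))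
    (v := fun q => a q.down.1 q.down.2) fun s => ?_).mono fun b hb η hη => ?_
  · obtain ⟨b, hb_inj, hb⟩ := hwit.exists_injective_realizations
      (s.map (Function.Embedding.subtype _)) (by simp +contextual)
    refine Set.infinite_of_injective_forall_mem hb_inj fun i η hη => ?_
    exact (realize_relabel_sumMap _ _ _ _ _).mpr (hb i η.1 (Finset.mem_map_of_mem _ hη))
  · exact ((realize_relabel_sumMap _ _ _ _ _).mp (hb ⟨η, hη⟩) :)

/-- **Remark 2.16**: If `(φ(x; y), (a_η)_{η ∈ 2^{≤ω}})` is a strongly indiscernible tree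
witnessing ATP in a monster model of a complete theory `T`, then the partial type
`{φ(x; a_η) : η ∈ 2^ω}` has infinitely many realizations. -/
theorem infinitely_many_realizations_of_branches
    (T : L.Theory) (hT : T.IsComplete)
    (M : Type w) [L.Structure M] [Nonempty M] (hM : M ⊨ T)
    (μ : Cardinal.{w}) (hμ : Cardinal.continuum < μ) (hsat : Saturated L μ M)
    {n m : ℕ} (φ : L.Formula (Fin n ⊕ Fin m)) (a : TNode → Fin m → M)
    (hind : StronglyIndiscernibleOver L a (∅ : Set M))
    (hwit : ATPWitnessFull φ a) :
    {b : Fin n → M | ∀ η : TNode, TNode.IsBranch η →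
        φ.Realize (Sum.elim b (a η))}.Infinite :=
  infinitely_many_realizations_of_branches_general M μ hμ hsat φ a hwit

end NATPPaper
end

section
/- Assume T is a theory such that acl defines a modular pregeometry in a monster model of T. Let A and B be algebraically closed sets, c a singleton with c ∉ acl(AB), and D := A ∩ B. Then acl(Ac) ∩ acl(Bc) = acl(cD). Moreover (without modularity, for any pregeometry): acl(cD) ∩ acl(AB) = D, acl(cA) ∩ acl(AB) = A, and acl(cB) ∩ acl(AB) = B. -/
open FirstOrder FirstOrder.Language

universe u v w

namespace NATPPaper

variable {L : FirstOrder.Language.{u, v}}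

/-- The model-theoretic algebraic closure of a set `A` in a structure `M`: the set of elements
satisfying some formula with parameters in `A` that has only finitely many solutions. -/
def acl (M : Type w) [L.Structure M] (A : Set M) : Set M :=
  {x | ∃ (k : ℕ) (φ : L.Formula (Fin 1 ⊕ Fin k)) (c : Fin k → M),
        (∀ j, c j ∈ A) ∧ φ.Realize (Sum.elim (fun _ => x) c) ∧
        {y : M | φ.Realize (Sum.elim (fun _ => y) c)}.Finite}

/-- A closure operator `cl` is a pregeometry: reflexivity, monotonicity, finite character,
transitivity and the exchange property. -/
def IsPregeometry {X : Type w} (cl : Set X → Set X) : Prop :=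
  (∀ A : Set X, A ⊆ cl A) ∧
  (∀ A B : Set X, A ⊆ B → cl A ⊆ cl B) ∧
  (∀ (A : Set X) (x : X), x ∈ cl A → ∃ F : Finset X, ↑F ⊆ A ∧ x ∈ cl ↑F) ∧
  (∀ A : Set X, cl (cl A) ⊆ cl A) ∧
  (∀ (A : Set X) (a b : X), a ∈ cl (A ∪ {b}) → a ∉ cl A → b ∈ cl (A ∪ {a}))

/-- `I` is an independent subset of `A` generating `A`, i.e. a basis of `A`,
with respect to the closure operator `cl`. -/
def IsBasisOf {X : Type w} (cl : Set X → Set X) (I : Finset X) (A : Set X) : Prop :=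
  ↑I ⊆ A ∧ (∀ x ∈ I, x ∉ cl (↑I \ {x})) ∧ A ⊆ cl ↑I

/-- A pregeometry is modular if `dim(B ∪ C) = dim B + dim C - dim (B ∩ C)` for all closed
finite-dimensional sets `B`, `C` (stated via cardinalities of arbitrary finite bases). -/
def IsModular {X : Type w} (cl : Set X → Set X) : Prop :=
  ∀ B C : Set X, cl B = B → cl C = C →
    ∀ iB iC iU iI : Finset X,
      IsBasisOf cl iB B → IsBasisOf cl iC C →
      IsBasisOf cl iU (B ∪ C) → IsBasisOf cl iI (B ∩ C) →
      iU.card + iI.card = iB.card + iC.card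

set_option linter.unusedSectionVars false

section PregeomLemmas

variable {X : Type w} [DecidableEq X] {cl : Set X → Set X}

/-- Independence of a finite set with respect to a closure operator. -/
def Indep (cl : Set X → Set X) (I : Finset X) : Prop :=
  ∀ x ∈ I, x ∉ cl (↑I \ {x})

lemma cl_cl (h : IsPregeometry cl) (S : Set X) : cl (cl S) = cl S :=
  (h.2.2.2.1 S).antisymm (h.1 _)

lemma cl_mono (h : IsPregeometry cl) {S T : Set X} (hST : S ⊆ T) : cl S ⊆ cl T :=
  h.2.1 _ _ hST

lemma subset_cl (h : IsPregeometry cl) (S : Set X) : S ⊆ cl S := h.1 S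

lemma cl_le_cl (h : IsPregeometry cl) {S T : Set X} (hST : S ⊆ cl T) : cl S ⊆ cl T := by
  calc cl S ⊆ cl (cl T) := cl_mono h hST
    _ = cl T := cl_cl h T

lemma indep_mono (h : IsPregeometry cl) {I J : Finset X} (hJI : J ⊆ I) (hI : Indep cl I) :
    Indep cl J := by
  intro x hxJ hx
  exact hI x (hJI hxJ)
    (cl_mono h (Set.diff_subset_diff_left (by exact_mod_cast hJI)) hx)

lemma indep_insert (h : IsPregeometry cl) {I : Finset X} {a : X}
    (hI : Indep cl I) (ha : a ∉ cl ↑I) : Indep cl (insert a I) := by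
  have haI : a ∉ (I : Set X) := fun h' => ha (subset_cl h _ h')
  intro x hx
  rcases Finset.mem_insert.1 hx with rfl | hxI
  · have e : (↑(insert x I) : Set X) \ {x} = ↑I := by
      push_cast
      rw [Set.insert_diff_of_mem _ (Set.mem_singleton x), Set.diff_singleton_eq_self haI]
    rw [e]; exact ha
  · intro hxcl
    have hax : a ≠ x := fun e => haI (e ▸ hxI)
    have e : (↑(insert a I) : Set X) \ {x} = (↑I \ {x}) ∪ {a} := by
      push_cast
      rw [Set.insert_diff_of_notMem _ (by simpa using hax), Set.union_singleton]
    rw [e] at hxcl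
    have hxnot : x ∉ cl (↑I \ {x}) := hI x hxI
    have hacl : a ∈ cl ((↑I \ {x}) ∪ {x}) := h.2.2.2.2 _ x a hxcl hxnot
    have e2 : (↑I \ {x}) ∪ {x} = (↑I : Set X) := by
      rw [Set.diff_union_self, Set.union_singleton,
        Set.insert_eq_of_mem (by exact_mod_cast hxI)]
    rw [e2] at hacl
    exact ha hacl

lemma steinitz (h : IsPregeometry cl) :
    ∀ (n : ℕ) (I F : Finset X), (I \ F).card ≤ n → Indep cl I → ↑I ⊆ cl ↑F →
      I.card ≤ F.card := by
  intro n
  induction n with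
  | zero =>
    intro I F hn _ _
    refine Finset.card_le_card ?_
    intro x hx
    by_contra hxF
    have hmem : x ∈ I \ F := Finset.mem_sdiff.2 ⟨hx, hxF⟩
    rw [Finset.card_eq_zero.1 (Nat.le_zero.1 hn)] at hmem
    exact Finset.notMem_empty x hmem
  | succ n ih =>
    intro I F hn hI hIF
    by_cases hsub : I ⊆ F
    · exact Finset.card_le_card hsub
    · obtain ⟨x, hxI, hxF⟩ : ∃ x ∈ I, x ∉ F := by
        by_contra h'
        push_neg at h'
        exact hsub h'
      have hxind : x ∉ cl (↑I \ {x}) := hI x hxI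
      have herase : ((I.erase x : Finset X) : Set X) = ↑I \ {x} := Finset.coe_erase x I
      obtain ⟨y, hyF, hycl⟩ : ∃ y ∈ F, y ∉ cl ↑(I.erase x) := by
        by_contra h'
        push_neg at h'
        have hFsub : (↑F : Set X) ⊆ cl ↑(I.erase x) := fun y hy => h' y (by exact_mod_cast hy)
        have hx2 : x ∈ cl ↑(I.erase x) := cl_le_cl h hFsub (hIF (by exact_mod_cast hxI))
        rw [herase] at hx2
        exact hxind hx2
      have hyI : y ∉ I := by
        intro hyI
        have hyx : y ≠ x := fun e => hxF (e ▸ hyF)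
        exact hycl (subset_cl h _ (by exact_mod_cast Finset.mem_erase.2 ⟨hyx, hyI⟩))
      have hI'indep : Indep cl (insert y (I.erase x)) :=
        indep_insert h (indep_mono h (Finset.erase_subset x I) hI) hycl
      have hI'F : ↑(insert y (I.erase x)) ⊆ cl ↑F := by
        intro z hz
        rcases Finset.mem_insert.1 (by exact_mod_cast hz) with rfl | hz'
        · exact subset_cl h _ (by exact_mod_cast hyF)
        · exact hIF (by exact_mod_cast Finset.erase_subset x I hz')
      have hcard' : (insert y (I.erase x) \ F).card ≤ n := by
        have hsub' : insert y (I.erase x) \ F ⊆ (I \ F).erase x := by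
          intro z hz
          rw [Finset.mem_sdiff] at hz
          rcases Finset.mem_insert.1 hz.1 with rfl | hz'
          · exact absurd hyF hz.2
          · exact Finset.mem_erase.2 ⟨(Finset.mem_erase.1 hz').1,
              Finset.mem_sdiff.2 ⟨(Finset.mem_erase.1 hz').2, hz.2⟩⟩
        have hxmem : x ∈ I \ F := Finset.mem_sdiff.2 ⟨hxI, hxF⟩
        have h1 : (insert y (I.erase x) \ F).card ≤ ((I \ F).erase x).card :=
          Finset.card_le_card hsub'
        have h2 : ((I \ F).erase x).card = (I \ F).card - 1 :=
          Finset.card_erase_of_mem hxmem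
        have h3 : 0 < (I \ F).card := Finset.card_pos.2 ⟨x, hxmem⟩
        omega
      have hle := ih (insert y (I.erase x)) F hcard' hI'indep hI'F
      have hcardI' : (insert y (I.erase x)).card = I.card := by
        rw [Finset.card_insert_of_notMem (fun hy' => hyI (Finset.erase_subset x I hy')),
          Finset.card_erase_of_mem hxI]
        have : 0 < I.card := Finset.card_pos.2 ⟨x, hxI⟩
        omega
      omega

lemma exists_basis (h : IsPregeometry cl) {S : Set X} {F : Finset X} (hS : S ⊆ cl ↑F) :
    ∃ I : Finset X, IsBasisOf cl I S := by
  classical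
  set P : ℕ → Prop := fun n => ∃ I : Finset X, Indep cl I ∧ ↑I ⊆ S ∧ I.card = n with hP
  have hP0 : P 0 := ⟨∅, fun x hx => absurd hx (Finset.notMem_empty x), by simp, rfl⟩
  have hbound : ∀ n, P n → n ≤ F.card := by
    rintro n ⟨I, hI, hIS, rfl⟩
    exact steinitz h (I \ F).card I F le_rfl hI (hIS.trans hS)
  obtain ⟨I, hIind, hIS, hIcard⟩ :=
    Nat.findGreatest_spec (P := P) (Nat.zero_le F.card) hP0
  refine ⟨I, hIS, hIind, ?_⟩
  intro y hy
  by_contra hycl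
  have hyI : y ∉ I := fun h' => hycl (subset_cl h _ (by exact_mod_cast h'))
  have hP' : P (I.card + 1) :=
    ⟨insert y I, indep_insert h hIind hycl,
      (by push_cast; exact Set.insert_subset hy hIS),
      Finset.card_insert_of_notMem hyI⟩
  have h1 : I.card + 1 ≤ F.card := hbound _ hP'
  exact Nat.findGreatest_is_greatest (by omega) h1 hP'

lemma span_of_card (h : IsPregeometry cl) {Z : Set X} {J I : Finset X}
    (hJ : IsBasisOf cl J Z) (hI : Indep cl I) (hIZ : ↑I ⊆ Z) (hcard : J.card ≤ I.card) :
    Z ⊆ cl ↑I := by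
  intro y hy
  by_contra hycl
  have hyI : y ∉ I := fun h' => hycl (subset_cl h _ (by exact_mod_cast h'))
  have hle : (insert y I).card ≤ J.card :=
    steinitz h _ _ J le_rfl (indep_insert h hI hycl)
      (by push_cast; exact Set.insert_subset (hJ.2.2 hy) (fun z hz => hJ.2.2 (hIZ hz)))
  rw [Finset.card_insert_of_notMem hyI] at hle
  omega

lemma cl_inter_subset (h : IsPregeometry cl) {S T : Set X} {c : X}
    (hST : S ⊆ cl T) (hc : c ∉ cl T) : cl (S ∪ {c}) ∩ cl T ⊆ cl S := by
  rintro x ⟨hx1, hx2⟩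
  by_contra hxS
  have hcx : c ∈ cl (S ∪ {x}) := h.2.2.2.2 S x c hx1 hxS
  exact hc (cl_le_cl h (Set.union_subset hST (Set.singleton_subset_iff.2 hx2)) hcx)

lemma main_abstract {X : Type w} [DecidableEq X] {cl : Set X → Set X} (h : IsPregeometry cl)
    (A B : Set X) (hA : cl A = A) (hB : cl B = B)
    (c : X) (hc : c ∉ cl (A ∪ B)) (D : Set X) (hD : D = A ∩ B) :
    (IsModular cl →
        cl (A ∪ {c}) ∩ cl (B ∪ {c}) = cl (D ∪ {c})) ∧
    cl (D ∪ {c}) ∩ cl (A ∪ B) = D ∧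
    cl (A ∪ {c}) ∩ cl (A ∪ B) = A ∧
    cl (B ∪ {c}) ∩ cl (A ∪ B) = B := by
  subst hD
  have hDclosed : cl (A ∩ B) = A ∩ B := by
    refine (Set.Subset.antisymm ?_ (subset_cl h _))
    intro x hx
    exact ⟨hA ▸ cl_mono h Set.inter_subset_left hx, hB ▸ cl_mono h Set.inter_subset_right hx⟩
  have hAsub : A ⊆ cl (A ∪ B) := (Set.subset_union_left).trans (subset_cl h _)
  have hBsub : B ⊆ cl (A ∪ B) := (Set.subset_union_right).trans (subset_cl h _)
  have part3 : cl (A ∪ {c}) ∩ cl (A ∪ B) = A := by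
    refine Set.Subset.antisymm ((cl_inter_subset h hAsub hc).trans hA.le) ?_
    exact fun x hx => ⟨subset_cl h _ (Or.inl hx), hAsub hx⟩
  have part4 : cl (B ∪ {c}) ∩ cl (A ∪ B) = B := by
    refine Set.Subset.antisymm ?_ (fun x hx => ⟨subset_cl h _ (Or.inl hx), hBsub hx⟩)
    have hBsub' : B ⊆ cl (A ∪ B) := hBsub
    exact (cl_inter_subset h hBsub' hc).trans hB.le
  have part2 : cl ((A ∩ B) ∪ {c}) ∩ cl (A ∪ B) = A ∩ B := by
    refine Set.Subset.antisymm ?_ (fun x hx => ⟨subset_cl h _ (Or.inl hx), hAsub hx.1⟩)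
    have hDsub : A ∩ B ⊆ cl (A ∪ B) := fun x hx => hAsub hx.1
    exact (cl_inter_subset h hDsub hc).trans hDclosed.le
  refine ⟨?_, part2, part3, part4⟩
  intro hmod
  refine Set.Subset.antisymm ?_ ?_
  swap
  · refine Set.subset_inter ?_ ?_
    · exact cl_mono h (Set.union_subset_union_left _ Set.inter_subset_left)
    · exact cl_mono h (Set.union_subset_union_left _ Set.inter_subset_right)
  rintro x ⟨hxA, hxB⟩
  by_cases hxab : x ∈ cl (A ∪ B)
  · have h3 : x ∈ A := by
      have : x ∈ cl (A ∪ {c}) ∩ cl (A ∪ B) := ⟨hxA, hxab⟩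
      rwa [part3] at this
    have h4 : x ∈ B := by
      have : x ∈ cl (B ∪ {c}) ∩ cl (A ∪ B) := ⟨hxB, hxab⟩
      rwa [part4] at this
    exact subset_cl h _ (Or.inl ⟨h3, h4⟩)
  · obtain ⟨G, hGsub, hxG⟩ := h.2.2.1 (A ∪ {c}) x hxA
    obtain ⟨H, hHsub, hxH⟩ := h.2.2.1 (B ∪ {c}) x hxB
    classical
    set A₀ : Finset X := G.erase c with hA₀
    set B₀ : Finset X := H.erase c with hB₀
    have hA₀A : (↑A₀ : Set X) ⊆ A := by
      intro z hz
      obtain ⟨hz1, hz2⟩ := Finset.mem_erase.1 (by exact_mod_cast hz)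
      rcases hGsub (by exact_mod_cast hz2) with h' | h'
      · exact h'
      · exact absurd h' hz1
    have hB₀B : (↑B₀ : Set X) ⊆ B := by
      intro z hz
      obtain ⟨hz1, hz2⟩ := Finset.mem_erase.1 (by exact_mod_cast hz)
      rcases hHsub (by exact_mod_cast hz2) with h' | h'
      · exact h'
      · exact absurd h' hz1
    have hGsub' : (↑G : Set X) ⊆ ↑A₀ ∪ {c} := by
      intro z hz
      by_cases hzc : z = c
      · exact Or.inr hzc
      · exact Or.inl (by exact_mod_cast Finset.mem_erase.2 ⟨hzc, by exact_mod_cast hz⟩)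
    have hHsub' : (↑H : Set X) ⊆ ↑B₀ ∪ {c} := by
      intro z hz
      by_cases hzc : z = c
      · exact Or.inr hzc
      · exact Or.inl (by exact_mod_cast Finset.mem_erase.2 ⟨hzc, by exact_mod_cast hz⟩)
    set A' : Set X := cl ↑A₀ with hA'
    set B' : Set X := cl ↑B₀ with hB'
    have hA'A : A' ⊆ A := hA ▸ cl_mono h hA₀A
    have hB'B : B' ⊆ B := hB ▸ cl_mono h hB₀B
    have hUsub : cl (A' ∪ B') ⊆ cl (A ∪ B) :=
      cl_mono h (Set.union_subset_union hA'A hB'B)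
    have hcU : c ∉ cl (A' ∪ B') := fun h' => hc (hUsub h')
    have hxA'c : x ∈ cl (A' ∪ {c}) := by
      refine cl_mono h (Set.union_subset_union_left _ (subset_cl h _)) ?_
      exact cl_le_cl h (hGsub'.trans (subset_cl h _)) hxG
    have hxB'c : x ∈ cl (B' ∪ {c}) := by
      refine cl_mono h (Set.union_subset_union_left _ (subset_cl h _)) ?_
      exact cl_le_cl h (hHsub'.trans (subset_cl h _)) hxH
    -- bases
    obtain ⟨IA, hIA⟩ := exists_basis h (S := A') (F := A₀) hA'.le
    obtain ⟨IB, hIB⟩ := exists_basis h (S := B') (F := B₀) hB'.le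
    obtain ⟨ID, hID⟩ := exists_basis h (S := A' ∩ B') (F := A₀)
      (Set.inter_subset_left.trans hA'.le)
    obtain ⟨IU, hIU⟩ := exists_basis h (S := A' ∪ B') (F := A₀ ∪ B₀) (by
      push_cast
      exact Set.union_subset (hA'.le.trans (cl_mono h Set.subset_union_left))
        (hB'.le.trans (cl_mono h Set.subset_union_right)))
    have hA'closed : cl A' = A' := by rw [hA']; exact cl_cl h _
    have hB'closed : cl B' = B' := by rw [hB']; exact cl_cl h _
    have hA'U : A' ⊆ cl (A' ∪ B') := Set.subset_union_left.trans (subset_cl h _)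
    have hB'U : B' ⊆ cl (A' ∪ B') := Set.subset_union_right.trans (subset_cl h _)
    have hclIA : cl ↑IA ⊆ A' := hA'closed ▸ cl_le_cl h (hIA.1.trans (subset_cl h _))
    have hclIB : cl ↑IB ⊆ B' := hB'closed ▸ cl_le_cl h (hIB.1.trans (subset_cl h _))
    have hclID : cl ↑ID ⊆ A' :=
      hA'closed ▸ cl_le_cl h ((hID.1.trans Set.inter_subset_left).trans (subset_cl h _))
    have hclIU : cl ↑IU ⊆ cl (A' ∪ B') := cl_le_cl h (hIU.1.trans (subset_cl h _))
    have hcIA : c ∉ cl ↑IA := fun h' => hcU (hA'U (hclIA h'))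
    have hcIB : c ∉ cl ↑IB := fun h' => hcU (hB'U (hclIB h'))
    have hcID : c ∉ cl ↑ID := fun h' => hcU (hA'U (hclID h'))
    have hcIU : c ∉ cl ↑IU := fun h' => hcU (hclIU h')
    have hcnotIA : c ∉ IA := fun h' => hcIA (subset_cl h _ (by exact_mod_cast h'))
    have hcnotIB : c ∉ IB := fun h' => hcIB (subset_cl h _ (by exact_mod_cast h'))
    have hcnotID : c ∉ ID := fun h' => hcID (subset_cl h _ (by exact_mod_cast h'))
    have hcnotIU : c ∉ IU := fun h' => hcIU (subset_cl h _ (by exact_mod_cast h'))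
    set S : Set X := cl (A' ∪ {c}) with hSdef
    set T : Set X := cl (B' ∪ {c}) with hTdef
    have hSclosed : cl S = S := by rw [hSdef]; exact cl_cl h _
    have hTclosed : cl T = T := by rw [hTdef]; exact cl_cl h _
    have hA'S : A' ⊆ S := Set.subset_union_left.trans (subset_cl h _)
    have hB'T : B' ⊆ T := Set.subset_union_left.trans (subset_cl h _)
    have hcS : c ∈ S := subset_cl h _ (Or.inr rfl)
    have hcT : c ∈ T := subset_cl h _ (Or.inr rfl)
    have hKA : IsBasisOf cl (insert c IA) S := by
      refine ⟨?_, indep_insert h hIA.2.1 hcIA, ?_⟩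
      · push_cast
        exact Set.insert_subset hcS (hIA.1.trans hA'S)
      · rw [hSdef]
        refine cl_le_cl h ?_
        push_cast
        exact Set.union_subset (hIA.2.2.trans (cl_mono h (Set.subset_insert _ _)))
          (Set.singleton_subset_iff.2 (subset_cl h _ (Set.mem_insert _ _)))
    have hKB : IsBasisOf cl (insert c IB) T := by
      refine ⟨?_, indep_insert h hIB.2.1 hcIB, ?_⟩
      · push_cast
        exact Set.insert_subset hcT (hIB.1.trans hB'T)
      · rw [hTdef]
        refine cl_le_cl h ?_
        push_cast
        exact Set.union_subset (hIB.2.2.trans (cl_mono h (Set.subset_insert _ _)))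
          (Set.singleton_subset_iff.2 (subset_cl h _ (Set.mem_insert _ _)))
    have hKU : IsBasisOf cl (insert c IU) (S ∪ T) := by
      refine ⟨?_, indep_insert h hIU.2.1 hcIU, ?_⟩
      · push_cast
        refine Set.insert_subset (Or.inl hcS) ?_
        intro z hz
        rcases hIU.1 hz with h' | h'
        · exact Or.inl (hA'S h')
        · exact Or.inr (hB'T h')
      · refine Set.union_subset ?_ ?_
        · rw [hSdef]
          refine cl_le_cl h ?_
          push_cast
          refine Set.union_subset ?_
            (Set.singleton_subset_iff.2 (subset_cl h _ (Set.mem_insert _ _)))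
          exact (Set.subset_union_left.trans hIU.2.2).trans (cl_mono h (Set.subset_insert _ _))
        · rw [hTdef]
          refine cl_le_cl h ?_
          push_cast
          refine Set.union_subset ?_
            (Set.singleton_subset_iff.2 (subset_cl h _ (Set.mem_insert _ _)))
          exact (Set.subset_union_right.trans hIU.2.2).trans (cl_mono h (Set.subset_insert _ _))
    obtain ⟨JI, hJI⟩ := exists_basis h (S := S ∩ T) (F := insert c A₀) (by
      refine Set.inter_subset_left.trans ?_
      rw [hSdef]
      refine cl_le_cl h ?_
      push_cast
      refine Set.union_subset (hA'.le.trans (cl_mono h (Set.subset_insert _ _)))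
        (Set.singleton_subset_iff.2 (subset_cl h _ (Set.mem_insert _ _))))
    have hm1 := hmod A' B' hA'closed hB'closed IA IB IU ID hIA hIB hIU hID
    have hm2 := hmod S T hSclosed hTclosed (insert c IA) (insert c IB) (insert c IU) JI
      hKA hKB hKU hJI
    have e1 : (insert c IA).card = IA.card + 1 := Finset.card_insert_of_notMem hcnotIA
    have e2 : (insert c IB).card = IB.card + 1 := Finset.card_insert_of_notMem hcnotIB
    have e3 : (insert c IU).card = IU.card + 1 := Finset.card_insert_of_notMem hcnotIU
    have eJI : JI.card = ID.card + 1 := by omega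
    have hKDind : Indep cl (insert c ID) := indep_insert h hID.2.1 hcID
    have hKDsub : (↑(insert c ID) : Set X) ⊆ S ∩ T := by
      push_cast
      refine Set.insert_subset ⟨hcS, hcT⟩ ?_
      intro z hz
      exact ⟨hA'S (hID.1 hz).1, hB'T (hID.1 hz).2⟩
    have hspan : S ∩ T ⊆ cl ↑(insert c ID) :=
      span_of_card h hJI hKDind hKDsub
        (by rw [Finset.card_insert_of_notMem hcnotID]; omega)
    have hx : x ∈ cl ↑(insert c ID) := hspan ⟨hxA'c, hxB'c⟩
    refine cl_mono h (show (↑(insert c ID) : Set X) ⊆ (A ∩ B) ∪ {c} from ?_) hx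
    push_cast
    refine Set.insert_subset (Or.inr rfl) ?_
    intro z hz
    exact Or.inl ⟨hA'A (hID.1 hz).1, hB'B (hID.1 hz).2⟩

end PregeomLemmas

/-- **Remark 4.8**: Suppose `acl` defines a pregeometry in a monster model `M` of a theory `T`.
Let `A`, `B` be algebraically closed, `c ∉ acl(AB)` a singleton, and `D := A ∩ B`.  Then
(under modularity) `acl(Ac) ∩ acl(Bc) = acl(cD)`, and moreover (without modularity)
`acl(cD) ∩ acl(AB) = D`, `acl(cA) ∩ acl(AB) = A`, and `acl(cB) ∩ acl(AB) = B`. -/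
theorem acl_pregeometry_intersections
    (T : L.Theory) (M : Theory.ModelType.{u, v, w} T)
    (hpre : IsPregeometry (acl (L := L) M))
    (A B : Set M) (hA : acl (L := L) M A = A) (hB : acl (L := L) M B = B)
    (c : M) (hc : c ∉ acl (L := L) M (A ∪ B)) (D : Set M) (hD : D = A ∩ B) :
    (IsModular (acl (L := L) M) →
        acl (L := L) M (A ∪ {c}) ∩ acl (L := L) M (B ∪ {c}) = acl (L := L) M (D ∪ {c})) ∧
    acl (L := L) M (D ∪ {c}) ∩ acl (L := L) M (A ∪ B) = D ∧
    acl (L := L) M (A ∪ {c}) ∩ acl (L := L) M (A ∪ B) = A ∧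
    acl (L := L) M (B ∪ {c}) ∩ acl (L := L) M (A ∪ B) = B := by
  classical
  exact main_abstract hpre A B hA hB c hc D hD

end NATPPaper
end
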